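/- Distinctness of double coset representatives: Let t, t' ∈ A_q and z, z' ∈ 𝕋, and suppose there exist k_1, k_2 ∈ K_1 with b_{t,z} = k_1 · b_{t',z'} · k_2. Then t = t', and if moreover t_1 < π/2 then z = z'. Consequently the map [cos t, z] ↦ K_1 b_{t,z} K_1 from X_q to the double coset space is injective. -/

import Mathlib

noncomputable section
open Matrix

/-- the alcove `A_q = {t : π/2 ≥ t₁ ≥ … ≥ t_q ≥ 0}` (coordinates `t 0, …, t (q-1)`). -/
def Aq (q : ℕ) : Set (Fin q → ℝ) :=
  {t | (∀ j, 0 ≤ t j ∧ t j ≤ Real.pi / 2) ∧ (∀ i j : Fin q, i ≤ j → t j ≤ t i)}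

/-- `h(z) = diag(z,1,…,1) ∈ M_q(ℂ)` -/
def hMat (q : ℕ) (z : ℂ) : Matrix (Fin q) (Fin q) ℂ :=
  Matrix.diagonal (fun j => if j.val = 0 then z else 1)

def cosMat (q : ℕ) (t : Fin q → ℝ) : Matrix (Fin q) (Fin q) ℂ :=
  Matrix.diagonal (fun j => (Real.cos (t j) : ℂ))

def sinMat (q : ℕ) (t : Fin q → ℝ) : Matrix (Fin q) (Fin q) ℂ :=
  Matrix.diagonal (fun j => (Real.sin (t j) : ℂ))

/-- index type for `SU(p+q)` with `p = m + q`: blocks of sizes `m, q, q`. -/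
abbrev bidx (m q : ℕ) := (Fin m ⊕ Fin q) ⊕ Fin q

/-- the matrix `b_{t,z}` -/
def bMat (m q : ℕ) (t : Fin q → ℝ) (z : ℂ) : Matrix (bidx m q) (bidx m q) ℂ :=
  Matrix.fromBlocks
    (Matrix.fromBlocks 1 0 0 (hMat q z⁻¹ * cosMat q t))
    (Matrix.fromRows 0 (-(sinMat q t)))
    (Matrix.fromCols 0 (sinMat q t))
    (hMat q z * cosMat q t)

/-- the subgroup `K₁ = SU(p) × SU(q)`, as a set of block diagonal matrices. -/
def K1set (m q : ℕ) : Set (Matrix (bidx m q) (bidx m q) ℂ) :=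
  {k | ∃ u ∈ Matrix.specialUnitaryGroup (Fin m ⊕ Fin q) ℂ,
        ∃ v ∈ Matrix.specialUnitaryGroup (Fin q) ℂ, k = Matrix.fromBlocks u 0 0 v}

/-- the point `[r, z] = (z r₁, r₂, …, r_q)` of the cone `X_q`, realized in
`ℂ × ℝ^q`; two points `[r,z]`, `[r,z']` coincide iff `r₁ = 0` or `z = z'`. -/
def XqPt (q : ℕ) (hq : 1 ≤ q) (r : Fin q → ℝ) (z : ℂ) : ℂ × (Fin q → ℝ) :=
  (z * (r ⟨0, hq⟩ : ℝ), r)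

/-!
The `(2,2)` block of a `K₁`-double-coset relation reads `D_{t,z} = v₁ D_{t',z'} v₂` with
`v₁, v₂ ∈ SU(q)`, where `D_{t,z} = h(z) cos t̲`. Hence `D_{t,z}ᴴ D_{t,z} = cos² t̲` is unitarily
conjugate to `cos² t̲'`, so the two diagonals agree as multisets; on the alcove both are sorted,
hence equal, and `t = t'` because `cos` is injective on `[0, π/2]`. Taking determinants then gives
`z ∏ cos t_j = z' ∏ cos t_j`, and the product vanishes only when `t₁ = π/2`.
-/

open Polynomial in
theorem Matrix.roots_charpoly_diagonal {n R : Type*} [Fintype n] [DecidableEq n] [CommRing R]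
    [IsDomain R] (d : n → R) : (diagonal d).charpoly.roots = Finset.univ.val.map d := by
  rw [charpoly_diagonal, Finset.prod_eq_multiset_prod,
    ← roots_multiset_prod_X_sub_C (Finset.univ.val.map d), Multiset.map_map]
  rfl

theorem Matrix.charpoly_star_mul_self_unitary_mul_unitary {n R : Type*} [Fintype n] [DecidableEq n]
    [CommRing R] [StarRing R] {u v : Matrix n n R} (hu : u ∈ unitaryGroup n R)
    (hv : v ∈ unitaryGroup n R) (A : Matrix n n R) :
    (star (u * A * v) * (u * A * v)).charpoly = (star A * A).charpoly := by
  have hconj : star (u * A * v) * (u * A * v) = star v * ((star A * A) * v) := by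
    simp only [star_mul, mul_assoc]
    rw [← mul_assoc (star u) u, Unitary.star_mul_self_of_mem hu, one_mul]
  rw [hconj, charpoly_mul_comm, mul_assoc, mul_assoc, Unitary.mul_star_self_of_mem hv, mul_one]

theorem Fin.eq_of_monotone_of_map_univ_eq {n : ℕ} {α : Type*} [PartialOrder α] {f g : Fin n → α}
    (hf : Monotone f) (hg : Monotone g)
    (h : Finset.univ.val.map f = Finset.univ.val.map g) : f = g := by
  rw [Fin.univ_val_map, Fin.univ_val_map, Multiset.coe_eq_coe] at h
  exact List.ofFn_injective <|
    h.eq_of_pairwise' hf.sortedLE_ofFn.pairwise hg.sortedLE_ofFn.pairwise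

theorem Matrix.toBlocks₂₂_fromBlocks_diag_mul_mul {l m R : Type*} [Fintype l] [Fintype m]
    [Semiring R] (a a' : Matrix l l R) (d d' : Matrix m m R) (M : Matrix (l ⊕ m) (l ⊕ m) R) :
    (fromBlocks a 0 0 d * M * fromBlocks a' 0 0 d').toBlocks₂₂ = d * M.toBlocks₂₂ * d' := by
  rw [← fromBlocks_toBlocks M]
  simp [fromBlocks_multiply, Matrix.mul_assoc]

namespace Aq

variable {q : ℕ} {t t' : Fin q → ℝ}

theorem cos_nonneg (ht : t ∈ Aq q) (j : Fin q) : 0 ≤ Real.cos (t j) :=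
  Real.cos_nonneg_of_mem_Icc ⟨by linarith [(ht.1 j).1, Real.pi_pos], (ht.1 j).2⟩

theorem monotone_cos_sq (ht : t ∈ Aq q) : Monotone fun j => Real.cos (t j) ^ 2 := by
  intro i j hij
  have hcos : Real.cos (t i) ≤ Real.cos (t j) :=
    Real.cos_le_cos_of_nonneg_of_le_pi (ht.1 j).1 (by linarith [(ht.1 i).2, Real.pi_pos])
      (ht.2 i j hij)
  exact pow_le_pow_left₀ (cos_nonneg ht i) hcos 2

theorem eq_of_cos_sq_eq (ht : t ∈ Aq q) (ht' : t' ∈ Aq q)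
    (h : (fun j => Real.cos (t j) ^ 2) = fun j => Real.cos (t' j) ^ 2) : t = t' := by
  funext j
  have hcos : Real.cos (t j) = Real.cos (t' j) :=
    (sq_eq_sq₀ (cos_nonneg ht j) (cos_nonneg ht' j)).mp (congrFun h j)
  have hIcc : ∀ {s : Fin q → ℝ}, s ∈ Aq q → s j ∈ Set.Icc 0 Real.pi := fun hs =>
    ⟨(hs.1 j).1, by linarith [(hs.1 j).2, Real.pi_pos]⟩
  exact Real.injOn_cos (hIcc ht) (hIcc ht') hcos

theorem cos_pos (ht : t ∈ Aq q) (hq : 1 ≤ q) (h₀ : t ⟨0, hq⟩ < Real.pi / 2) (j : Fin q) :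
    0 < Real.cos (t j) :=
  Real.cos_pos_of_mem_Ioo ⟨by linarith [(ht.1 j).1, Real.pi_pos],
    (ht.2 ⟨0, hq⟩ j (Nat.zero_le j.val)).trans_lt h₀⟩

end Aq

theorem star_hMat_mul_cosMat_mul_self {q : ℕ} {w : ℂ} (hw : ‖w‖ = 1) (s : Fin q → ℝ) :
    star (hMat q w * cosMat q s) * (hMat q w * cosMat q s)
      = diagonal fun j => ((Real.cos (s j) ^ 2 : ℝ) : ℂ) := by
  rw [hMat, cosMat, diagonal_mul_diagonal, star_eq_conjTranspose, diagonal_conjTranspose,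
    diagonal_mul_diagonal]
  congr 1
  funext j
  simp only [Pi.star_apply, star_mul', Complex.star_def, Complex.conj_ofReal]
  split_ifs
  · rw [mul_mul_mul_comm, Complex.conj_mul', hw]
    push_cast
    ring
  · rw [map_one, one_mul]
    push_cast
    ring

theorem det_hMat_mul_cosMat {q : ℕ} (hq : 1 ≤ q) (w : ℂ) (s : Fin q → ℝ) :
    (hMat q w * cosMat q s).det = w * ∏ j, (Real.cos (s j) : ℂ) := by
  rw [det_mul, hMat, cosMat, det_diagonal, det_diagonal,
    Finset.prod_eq_single (⟨0, hq⟩ : Fin q) (fun j _ hj => if_neg (Fin.val_ne_iff.mpr hj))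
      (by simp)]
  simp

theorem map_cos_sq_eq_of_hMat_mul_cosMat_eq {q : ℕ} {t t' : Fin q → ℝ} {z z' : ℂ}
    (hz : ‖z‖ = 1) (hz' : ‖z'‖ = 1) {v₁ v₂ : Matrix (Fin q) (Fin q) ℂ}
    (hv₁ : v₁ ∈ unitaryGroup (Fin q) ℂ) (hv₂ : v₂ ∈ unitaryGroup (Fin q) ℂ)
    (h : hMat q z * cosMat q t = v₁ * (hMat q z' * cosMat q t') * v₂) :
    Finset.univ.val.map (fun j => Real.cos (t j) ^ 2)
      = Finset.univ.val.map (fun j => Real.cos (t' j) ^ 2) := by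
  have hroots := congrArg (fun A => A.charpoly.roots) (congrArg (fun A => star A * A) h)
  simp only [charpoly_star_mul_self_unitary_mul_unitary hv₁ hv₂,
    star_hMat_mul_cosMat_mul_self hz, star_hMat_mul_cosMat_mul_self hz',
    roots_charpoly_diagonal] at hroots
  refine Multiset.map_injective Complex.ofReal_injective ?_
  simpa only [Multiset.map_map, Function.comp_def] using hroots

theorem doubleCoset_representatives_distinct_general (m q : ℕ) (hq : 1 ≤ q)
    (t t' : Fin q → ℝ) (ht : t ∈ Aq q) (ht' : t' ∈ Aq q)
    (z z' : ℂ) (hz : ‖z‖ = 1) (hz' : ‖z'‖ = 1)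
    (h : ∃ k₁ ∈ K1set m q, ∃ k₂ ∈ K1set m q,
          bMat m q t z = k₁ * bMat m q t' z' * k₂) :
    t = t' ∧ (t ⟨0, hq⟩ < Real.pi / 2 → z = z') ∧
      XqPt q hq (fun j => Real.cos (t j)) z = XqPt q hq (fun j => Real.cos (t' j)) z' := by
  obtain ⟨_, ⟨u₁, -, v₁, hv₁, rfl⟩, _, ⟨u₂, -, v₂, hv₂, rfl⟩, hb⟩ := h
  rw [mem_specialUnitaryGroup_iff] at hv₁ hv₂
  have hD : hMat q z * cosMat q t = v₁ * (hMat q z' * cosMat q t') * v₂ := by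
    simpa [bMat, toBlocks₂₂_fromBlocks_diag_mul_mul] using congrArg toBlocks₂₂ hb
  obtain rfl : t = t' := Aq.eq_of_cos_sq_eq ht ht' <| Fin.eq_of_monotone_of_map_univ_eq
    (Aq.monotone_cos_sq ht) (Aq.monotone_cos_sq ht')
    (map_cos_sq_eq_of_hMat_mul_cosMat_eq hz hz' hv₁.1 hv₂.1 hD)
  have hdet : z * ∏ j, (Real.cos (t j) : ℂ) = z' * ∏ j, (Real.cos (t j) : ℂ) := by
    simpa [det_hMat_mul_cosMat hq, hv₁.2, hv₂.2] using congrArg det hD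
  have hzz' : t ⟨0, hq⟩ < Real.pi / 2 → z = z' := fun h₀ =>
    mul_right_cancel₀ (Finset.prod_ne_zero_iff.mpr fun j _ =>
      Complex.ofReal_ne_zero.mpr (Aq.cos_pos ht hq h₀ j).ne') hdet
  refine ⟨rfl, hzz', Prod.ext ?_ rfl⟩
  rcases (ht.1 ⟨0, hq⟩).2.lt_or_eq with h₀ | h₀
  · simp [XqPt, hzz' h₀]
  · simp [XqPt, h₀]

/-- **Distinctness of double coset representatives.** If `b_{t,z}` and `b_{t',z'}`
lie in the same `K₁`-double coset, then `t = t'`, and if moreover `t₁ < π/2` then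
`z = z'`; consequently the corresponding points `[cos t, z]` and `[cos t', z']`
of `X_q` coincide, i.e. the map `[cos t, z] ↦ K₁ b_{t,z} K₁` is injective. -/
theorem doubleCoset_representatives_distinct (m q : ℕ) (hm : 1 ≤ m) (hq : 1 ≤ q)
    (t t' : Fin q → ℝ) (ht : t ∈ Aq q) (ht' : t' ∈ Aq q)
    (z z' : ℂ) (hz : ‖z‖ = 1) (hz' : ‖z'‖ = 1)
    (h : ∃ k₁ ∈ K1set m q, ∃ k₂ ∈ K1set m q,
          bMat m q t z = k₁ * bMat m q t' z' * k₂) :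
    t = t' ∧ (t ⟨0, hq⟩ < Real.pi / 2 → z = z') ∧
      XqPt q hq (fun j => Real.cos (t j)) z = XqPt q hq (fun j => Real.cos (t' j)) z' :=
  doubleCoset_representatives_distinct_general m q hq t t' ht ht' z z' hz hz' h

end
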